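/- arXiv:2204.12327 — 2 statements merged into one kernel-verified Lean document; each statement's English description precedes it below -/
import Mathlib

section
/- Let q : ℝ → ℂ be twice continuously differentiable with |q''(t)| ≤ C·(1+|t|)^{-1} for all t ∈ ℝ. Define h(μ) = (1/2)∫_{-1}^{1} (1-λ²)^{-1/2} λ q'(λμ) dλ for μ > 0. Then there is a constant C' (depending only on C) such that (1+μ)·|h'(μ)| ≤ C' for all μ > 0. -/
/-!
Differentiating under the integral sign gives
`h'(μ) = ½ ∫₋₁¹ (1 - λ²)^{-1/2} λ² q''(λμ) dλ`. For `|λ| ≤ 1` and `μ ≥ 0` one has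
`λ² (1 + |λ|μ)⁻¹ ≤ (1 + μ)⁻¹`, so the decay of `q''` bounds the integrand by
`C (1 + μ)⁻¹ (1 - λ²)^{-1/2}`, and `∫₋₁¹ (1 - λ²)^{-1/2} dλ = π` yields `(1 + μ)|h'(μ)| ≤ Cπ/2`.
-/

open Real intervalIntegral MeasureTheory Set

-- For `x < 0` both sides vanish: `√` truncates, and `rpow` at a negative base carries a factor
-- `cos (-π / 2) = 0`.
theorem Real.rpow_neg_half_eq_sqrt_inv (x : ℝ) : x ^ (-(1 / 2) : ℝ) = √x⁻¹ := by
  rcases le_or_gt 0 x with hx | hx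
  · rw [rpow_neg hx, sqrt_inv, sqrt_eq_rpow]
  · rw [rpow_def_of_neg hx, sqrt_eq_zero_of_nonpos (inv_neg''.mpr hx).le, neg_mul,
      cos_neg, div_mul_eq_mul_div, one_mul, cos_pi_div_two, mul_zero]

theorem intervalIntegrable_one_sub_sq_rpow_neg_half :
    IntervalIntegrable (fun t : ℝ => (1 - t ^ 2) ^ (-(1 / 2) : ℝ)) volume (-1) 1 := by
  simpa only [rpow_neg_half_eq_sqrt_inv] using
    Polynomial.Chebyshev.intervalIntegrable_sqrt_one_sub_sq_inv

theorem integral_one_sub_sq_rpow_neg_half :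
    ∫ t in (-1 : ℝ)..1, (1 - t ^ 2) ^ (-(1 / 2) : ℝ) = π := by
  rw [← Polynomial.Chebyshev.integral_eval_T_real_measureT_zero,
    Polynomial.Chebyshev.integral_measureT]
  simp only [rpow_neg_half_eq_sqrt_inv, Polynomial.Chebyshev.T_zero, Polynomial.eval_one, one_mul]

theorem sq_mul_inv_one_add_abs_mul_le {t μ : ℝ} (ht : |t| ≤ 1) (hμ : 0 ≤ μ) :
    t ^ 2 * (1 + |t| * μ)⁻¹ ≤ (1 + μ)⁻¹ := by
  rw [← div_eq_mul_inv, div_le_iff₀ (by positivity), ← sq_abs,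
    inv_mul_eq_div, le_div_iff₀ (by positivity)]
  have : |t| ^ 2 ≤ |t| := by nlinarith [abs_nonneg t]
  nlinarith [mul_le_mul_of_nonneg_right this hμ]

theorem hasDerivAt_intervalIntegral_smul_comp_mul {E : Type*} [NormedAddCommGroup E]
    [NormedSpace ℝ E] [CompleteSpace E] {f : ℝ → E} (hf : ContDiff ℝ 1 f) {k : ℝ → ℝ}
    {a b : ℝ} (hk : IntervalIntegrable k volume a b) (x₀ : ℝ) :
    HasDerivAt (fun x => ∫ t in a..b, k t • f (t * x))
      (∫ t in a..b, k t • (t • deriv f (t * x₀))) x₀ := by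
  have hf_cont : Continuous f := hf.continuous
  have hf_deriv_cont : Continuous (deriv f) := hf.continuous_deriv_one
  obtain ⟨M, hM⟩ := (isCompact_uIcc.prod (isCompact_closedBall x₀ 1)).exists_bound_of_continuousOn
    (f := fun p : ℝ × ℝ => p.1 • deriv f (p.1 * p.2)) (by fun_prop)
  have hk_meas := hk.def'.aestronglyMeasurable
  refine (hasDerivAt_integral_of_dominated_loc_of_deriv_le
    (F := fun x t => k t • f (t * x)) (F' := fun x t => k t • (t • deriv f (t * x)))
    (bound := fun t => ‖k t‖ * M) (Metric.ball_mem_nhds x₀ one_pos)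
    (.of_forall fun x => hk_meas.smul (Continuous.aestronglyMeasurable (by fun_prop)))
    (hk.smul_continuousOn (by fun_prop))
    (hk_meas.smul (Continuous.aestronglyMeasurable (by fun_prop))) (.of_forall ?_)
    (hk.norm.mul_const M) (.of_forall ?_)).2
  · intro t ht x hx
    rw [norm_smul]
    exact mul_le_mul_of_nonneg_left (hM (t, x) ⟨uIoc_subset_uIcc ht,
      Metric.ball_subset_closedBall hx⟩) (norm_nonneg _)
  · intro t _ x _
    exact (((hf.differentiable one_ne_zero).differentiableAt.hasDerivAt.scomp x
      ((hasDerivAt_id x).const_mul t)).const_smul (k t)).congr_deriv (by simp)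

theorem norm_integral_rpow_neg_half_mul_sq_smul_le {E : Type*} [NormedAddCommGroup E]
    [NormedSpace ℝ E] {g : ℝ → E} {C μ : ℝ} (hg : ∀ s, ‖g s‖ ≤ C * (1 + |s|)⁻¹) (hμ : 0 ≤ μ) :
    ‖∫ t in (-1 : ℝ)..1, ((1 - t ^ 2) ^ (-(1 / 2) : ℝ) * t) • (t • g (t * μ))‖ ≤
      C * π / (1 + μ) := by
  have hC : 0 ≤ C := (norm_nonneg _).trans (by simpa using hg 0)
  calc _ ≤ ∫ t in (-1 : ℝ)..1, C * (1 + μ)⁻¹ * (1 - t ^ 2) ^ (-(1 / 2) : ℝ) :=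
        norm_integral_le_of_norm_le (by norm_num) (.of_forall fun t ht => ?_)
          (intervalIntegrable_one_sub_sq_rpow_neg_half.const_mul _)
    _ = C * π / (1 + μ) := by
      rw [intervalIntegral.integral_const_mul, integral_one_sub_sq_rpow_neg_half,
        div_eq_mul_inv]
      ring
  have ht : |t| ≤ 1 := abs_le.mpr ⟨ht.1.le, ht.2⟩
  have hw : 0 ≤ (1 - t ^ 2) ^ (-(1 / 2) : ℝ) :=
    rpow_nonneg (sub_nonneg.mpr (by rw [← sq_abs]; exact pow_le_one₀ (abs_nonneg t) ht)) _
  have hgt : ‖g (t * μ)‖ ≤ C * (1 + |t| * μ)⁻¹ := by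
    simpa only [abs_mul, abs_of_nonneg hμ] using hg (t * μ)
  calc ‖((1 - t ^ 2) ^ (-(1 / 2) : ℝ) * t) • (t • g (t * μ))‖
      = (1 - t ^ 2) ^ (-(1 / 2) : ℝ) * (t ^ 2 * ‖g (t * μ)‖) := by
        rw [norm_smul, norm_smul, norm_mul, Real.norm_of_nonneg hw, Real.norm_eq_abs, ← sq_abs]
        ring
    _ ≤ (1 - t ^ 2) ^ (-(1 / 2) : ℝ) * (t ^ 2 * (C * (1 + |t| * μ)⁻¹)) := by gcongr
    _ = (1 - t ^ 2) ^ (-(1 / 2) : ℝ) * (C * (t ^ 2 * (1 + |t| * μ)⁻¹)) := by ring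
    _ ≤ (1 - t ^ 2) ^ (-(1 / 2) : ℝ) * (C * (1 + μ)⁻¹) := by
        gcongr
        exact sq_mul_inv_one_add_abs_mul_le ht hμ
    _ = C * (1 + μ)⁻¹ * (1 - t ^ 2) ^ (-(1 / 2) : ℝ) := by ring

theorem h_deriv_weighted_bound (q : ℝ → ℂ) (C : ℝ) (hq : ContDiff ℝ 2 q)
    (hq'' : ∀ t : ℝ, ‖deriv (deriv q) t‖ ≤ C * (1 + |t|)⁻¹) :
    ∃ C' : ℝ, ∀ μ : ℝ, 0 < μ →
      (1 + μ) * ‖deriv (fun ν : ℝ => (1 / 2 : ℝ) • ∫ lam in (-1:ℝ)..1,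
          (((1 - lam ^ 2 : ℝ) ^ (-(1/2) : ℝ) * lam : ℝ)) • deriv q (lam * ν)) μ‖ ≤ C' := by
  refine ⟨C * π / 2, fun μ hμ => ?_⟩
  have hk : IntervalIntegrable (fun t : ℝ => (1 - t ^ 2) ^ (-(1 / 2) : ℝ) * t) volume (-1) 1 :=
    intervalIntegrable_one_sub_sq_rpow_neg_half.mul_continuousOn continuousOn_id
  have hderiv := hasDerivAt_intervalIntegral_smul_comp_mul (hq.deriv' (n := 1)) hk μ
  rw [deriv_fun_const_smul_field, hderiv.deriv, norm_smul]
  calc (1 + μ) * (‖(1 / 2 : ℝ)‖ * ‖_‖) ≤ (1 + μ) * (1 / 2 * (C * π / (1 + μ))) := by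
        rw [Real.norm_of_nonneg (by norm_num)]
        gcongr
        exact norm_integral_rpow_neg_half_mul_sq_smul_le hq'' hμ.le
    _ = C * π / 2 := by field_simp
end

section
/- Let ν : ℝ → ℂ be a Schwartz function and h : ℝ → ℂ a bounded measurable function such that h is continuously differentiable with (1+|μ|)·|h'(μ)| ≤ C for all μ. Then the convolution F = ν * h is continuously differentiable and there are constants C₀, C₁ with |F(y)| ≤ C₀ and |F'(y)| ≤ C₁ (1+|y|)^{-1} for all y ∈ ℝ. -/
open Real MeasureTheory

/-!
Differentiating under the integral sign gives `F' = ν * h'`, and both `F` and `F'` are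
dominated by a multiple of `‖ν‖`, which is integrable. The decay of `F'` comes from the
Peetre-type inequality `1 + |y| ≤ (1 + |t|) (1 + |y - t|)`: it turns the weight `1 + |y - t|`
carried by `h'(y - t)` into the weight `1 + |t|` on `ν`, which a Schwartz function absorbs.
-/

theorem one_add_abs_le_mul_one_add_abs_sub (y t : ℝ) :
    1 + |y| ≤ (1 + |t|) * (1 + |y - t|) := by
  have := abs_add_le t (y - t)
  rw [add_sub_cancel] at this
  nlinarith [abs_nonneg t, abs_nonneg (y - t)]

theorem SchwartzMap.integrable_one_add_abs_mul_norm {𝕜 : Type*} [RCLike 𝕜] (ν : SchwartzMap ℝ 𝕜) :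
    Integrable fun t => (1 + |t|) * ‖ν t‖ := by
  simp only [add_mul, one_mul]
  exact ν.integrable.norm.add (by simpa using ν.integrable_pow_mul volume 1)

section ConvolutionWithBounded

variable {𝕜 : Type*} [RCLike 𝕜] {f g : ℝ → 𝕜} {M C : ℝ}

theorem norm_mul_comp_sub_le (hM : ∀ x, ‖g x‖ ≤ M) (t y : ℝ) :
    ‖f t * g (y - t)‖ ≤ M * ‖f t‖ := by
  rw [norm_mul, mul_comm]
  gcongr
  exact hM _

theorem integrable_mul_comp_sub (hf : Integrable f) (hg : Measurable g) (hM : ∀ x, ‖g x‖ ≤ M)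
    (y : ℝ) : Integrable fun t => f t * g (y - t) :=
  hf.mul_bdd (hg.comp (measurable_const.sub measurable_id)).aestronglyMeasurable
    (.of_forall fun _ => hM _)

theorem norm_integral_mul_comp_sub_le (hf : Integrable f) (hM : ∀ x, ‖g x‖ ≤ M) (y : ℝ) :
    ‖∫ t, f t * g (y - t)‖ ≤ M * ∫ t, ‖f t‖ := by
  rw [← integral_const_mul]
  exact norm_integral_le_of_norm_le (hf.norm.const_mul M)
    (.of_forall fun t => norm_mul_comp_sub_le hM t y)

theorem continuous_integral_mul_comp_sub (hf : Integrable f) (hg : Continuous g)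
    (hM : ∀ x, ‖g x‖ ≤ M) : Continuous fun y => ∫ t, f t * g (y - t) :=
  continuous_of_dominated
    (fun y => (integrable_mul_comp_sub hf hg.measurable hM y).aestronglyMeasurable)
    (fun y => .of_forall fun t => norm_mul_comp_sub_le hM t y) (hf.norm.const_mul M)
    (.of_forall fun _ => continuous_const.mul (hg.comp (continuous_id.sub continuous_const)))

theorem hasDerivAt_integral_mul_comp_sub (hf : Integrable f) (hg : Differentiable ℝ g)
    (hM : ∀ x, ‖g x‖ ≤ M) (hC : ∀ x, ‖deriv g x‖ ≤ C) (y : ℝ) :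
    HasDerivAt (fun y => ∫ t, f t * g (y - t)) (∫ t, f t * deriv g (y - t)) y := by
  have hint := integrable_mul_comp_sub hf hg.continuous.measurable hM
  refine (hasDerivAt_integral_of_dominated_loc_of_deriv_le (bound := fun t => C * ‖f t‖)
    (Metric.ball_mem_nhds y zero_lt_one) (.of_forall fun x => (hint x).aestronglyMeasurable)
    (hint y) (integrable_mul_comp_sub hf (measurable_deriv g) hC y).aestronglyMeasurable
    (.of_forall fun t x _ => norm_mul_comp_sub_le hC t x) (hf.norm.const_mul C)
    (.of_forall fun t x _ => ?_)).2
  simpa using ((hg (x - t)).hasDerivAt.comp_sub_const x t).const_mul (f t)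

theorem norm_integral_mul_comp_sub_le_of_decay (hf : Integrable fun t => (1 + |t|) * ‖f t‖)
    (hC : ∀ x, (1 + |x|) * ‖g x‖ ≤ C) (y : ℝ) :
    ‖∫ t, f t * g (y - t)‖ ≤ (C * ∫ t, (1 + |t|) * ‖f t‖) * (1 + |y|)⁻¹ := by
  rw [← integral_const_mul, ← integral_mul_const]
  refine norm_integral_le_of_norm_le ((hf.const_mul C).mul_const _) (.of_forall fun t => ?_)
  rw [norm_mul, le_mul_inv_iff₀ (by positivity)]
  calc ‖f t‖ * ‖g (y - t)‖ * (1 + |y|)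
      ≤ ‖f t‖ * ‖g (y - t)‖ * ((1 + |t|) * (1 + |y - t|)) := by
        gcongr; exact one_add_abs_le_mul_one_add_abs_sub y t
    _ = (1 + |t|) * ‖f t‖ * ((1 + |y - t|) * ‖g (y - t)‖) := by ring
    _ ≤ (1 + |t|) * ‖f t‖ * C := by gcongr; exact hC _
    _ = C * ((1 + |t|) * ‖f t‖) := by ring

end ConvolutionWithBounded

theorem convolution_schwartz_symbol_general (ν : SchwartzMap ℝ ℂ) (h : ℝ → ℂ) (C : ℝ)
    (hbdd : ∃ M : ℝ, ∀ μ : ℝ, ‖h μ‖ ≤ M)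
    (hC1 : ContDiff ℝ 1 h) (hh' : ∀ μ : ℝ, (1 + |μ|) * ‖deriv h μ‖ ≤ C) :
    ContDiff ℝ 1 (fun y : ℝ => ∫ t : ℝ, ν t * h (y - t)) ∧
    ∃ C₀ C₁ : ℝ, ∀ y : ℝ,
      ‖∫ t : ℝ, ν t * h (y - t)‖ ≤ C₀ ∧
      ‖deriv (fun y : ℝ => ∫ t : ℝ, ν t * h (y - t)) y‖ ≤ C₁ * (1 + |y|)⁻¹ := by
  obtain ⟨M, hM⟩ := hbdd
  have hh'_bdd : ∀ μ, ‖deriv h μ‖ ≤ C := fun μ =>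
    (le_mul_of_one_le_left (norm_nonneg _) (by linarith [abs_nonneg μ])).trans (hh' μ)
  have hderiv := hasDerivAt_integral_mul_comp_sub ν.integrable
    (hC1.differentiable one_ne_zero) hM hh'_bdd
  refine ⟨contDiff_one_iff_deriv.2 ⟨fun y => (hderiv y).differentiableAt, ?_⟩,
    M * ∫ t, ‖ν t‖, C * ∫ t, (1 + |t|) * ‖ν t‖,
    fun y => ⟨norm_integral_mul_comp_sub_le ν.integrable hM y, ?_⟩⟩
  · rw [funext fun y => (hderiv y).deriv]
    exact continuous_integral_mul_comp_sub ν.integrable (hC1.continuous_deriv le_rfl) hh'_bdd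
  · rw [(hderiv y).deriv]
    exact norm_integral_mul_comp_sub_le_of_decay ν.integrable_one_add_abs_mul_norm hh' y

theorem convolution_schwartz_symbol (ν : SchwartzMap ℝ ℂ) (h : ℝ → ℂ) (C : ℝ)
    (hmeas : Measurable h) (hbdd : ∃ M : ℝ, ∀ μ : ℝ, ‖h μ‖ ≤ M)
    (hC1 : ContDiff ℝ 1 h) (hh' : ∀ μ : ℝ, (1 + |μ|) * ‖deriv h μ‖ ≤ C) :
    ContDiff ℝ 1 (fun y : ℝ => ∫ t : ℝ, ν t * h (y - t)) ∧
    ∃ C₀ C₁ : ℝ, ∀ y : ℝ,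
      ‖∫ t : ℝ, ν t * h (y - t)‖ ≤ C₀ ∧
      ‖deriv (fun y : ℝ => ∫ t : ℝ, ν t * h (y - t)) y‖ ≤ C₁ * (1 + |y|)⁻¹ :=
  convolution_schwartz_symbol_general ν h C hbdd hC1 hh'
end
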